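/- (Linear convergence of gradient-learning updates.) Let L > 0, α > 0, and η = 1/(8L). Suppose f_0, f_1, …, f_T : X → (0,1) is a sequence of measurable hypotheses with ℓ_D(f_t;y) finite for all t, such that for each t < T, f_{t+1} is the multiplicative-weights update of f_t by some measurable h_t : X → ℝ with step η, where |η·h_t(x)| ≤ 1 for all x, E[h_t(x)²] ≤ L·ℓ_D(f_t;y), and E[h_t(x)·(f_t(x) − y(x))] ≥ (1/4)·ℓ_D(f_t;y). Then ℓ_D(f_T;y) ≤ e^{−T/(64L)}·ℓ_D(f_0;y); in particular, if ℓ_D(f_0;y) > α and T ≥ 64·L·log(ℓ_D(f_0;y)/α), then ℓ_D(f_T;y) ≤ α. -/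

import Mathlib

/-!
Writing `Z = 1 - f + f e^{-ηh}` for the normaliser of the update, the pointwise loss changes by
exactly `y ηh + log Z`, and `log Z ≤ Z - 1 ≤ -f ηh + (ηh)²` when `|ηh| ≤ 1`. Integrating, one step
lowers the loss by at least `η E[h (f - y)] - η² E[h²] ≥ (η/4 - η² L) ℓ = ℓ / (64 L)`, so the loss
contracts by `1 - 1/(64L) ≤ e^{-1/(64L)}` per step.
-/

open MeasureTheory Real Set

noncomputable section

def crossEntropy (p q : ℝ) : ℝ := -q * log p - (1 - q) * log (1 - p)

def mwUpdate (p η v : ℝ) : ℝ := p * exp (-η * v) / (1 - p + p * exp (-η * v))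

lemma crossEntropy_nonneg {p q : ℝ} (hp : p ∈ Ioo 0 1) (hq : q ∈ Icc 0 1) :
    0 ≤ crossEntropy p q := by
  obtain ⟨hp0, hp1⟩ := hp
  obtain ⟨hq0, hq1⟩ := hq
  have h1 : log p ≤ 0 := log_nonpos hp0.le hp1.le
  have h2 : log (1 - p) ≤ 0 := log_nonpos (by linarith) (by linarith)
  unfold crossEntropy
  nlinarith

lemma crossEntropy_mwUpdate {p : ℝ} (hp : p ∈ Ioo 0 1) (q η v : ℝ) :
    crossEntropy (mwUpdate p η v) q
      = crossEntropy p q + q * (η * v) + log (1 - p + p * exp (-η * v)) := by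
  obtain ⟨hp0, hp1⟩ := hp
  have hZ : 0 < 1 - p + p * exp (-η * v) := by nlinarith [exp_pos (-η * v)]
  have hcompl : 1 - mwUpdate p η v = (1 - p) / (1 - p + p * exp (-η * v)) := by
    unfold mwUpdate
    field_simp
    ring
  rw [crossEntropy, crossEntropy, hcompl, mwUpdate,
    log_div (by positivity) hZ.ne', log_mul hp0.ne' (exp_pos _).ne', log_exp,
    log_div (by linarith) hZ.ne']
  ring

lemma crossEntropy_mwUpdate_le {p : ℝ} (hp : p ∈ Ioo 0 1) (q : ℝ) {η v : ℝ}
    (hηv : |η * v| ≤ 1) :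
    crossEntropy (mwUpdate p η v) q
      ≤ crossEntropy p q - η * (v * (p - q)) + η ^ 2 * v ^ 2 := by
  have hZ : 0 < 1 - p + p * exp (-η * v) := by nlinarith [exp_pos (-η * v), hp.1, hp.2]
  have hlog := log_le_sub_one_of_pos hZ
  have hexp : exp (-η * v) - 1 + η * v ≤ (η * v) ^ 2 := by
    have := abs_exp_sub_one_sub_id_le (x := -(η * v)) (by rwa [abs_neg])
    rw [neg_mul]
    linarith [(abs_le.1 this).2]
  rw [crossEntropy_mwUpdate hp]
  nlinarith [hp.1, hp.2, sq_nonneg (η * v)]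

lemma integral_crossEntropy_mwUpdate_le {X : Type*} [MeasurableSpace X] {D : Measure X}
    [IsFiniteMeasure D] {y p p' h : X → ℝ} {η : ℝ}
    (hy : Measurable y) (hp : Measurable p) (hh : Measurable h)
    (hy01 : ∀ x, y x ∈ Icc 0 1) (hp01 : ∀ x, p x ∈ Ioo 0 1) (hηh : ∀ x, |η * h x| ≤ 1)
    (hp' : ∀ x, p' x = mwUpdate (p x) η (h x))
    (hℓ : Integrable (fun x => crossEntropy (p x) (y x)) D)
    (hℓ' : Integrable (fun x => crossEntropy (p' x) (y x)) D) :
    ∫ x, crossEntropy (p' x) (y x) ∂D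
      ≤ ∫ x, crossEntropy (p x) (y x) ∂D - η * ∫ x, h x * (p x - y x) ∂D
        + η ^ 2 * ∫ x, h x ^ 2 ∂D := by
  have hpy : ∀ x, |p x - y x| ≤ 1 := fun x =>
    abs_le.2 ⟨by linarith [(hp01 x).1, (hy01 x).2], by linarith [(hp01 x).2, (hy01 x).1]⟩
  have hcorr : Integrable (fun x => η * (h x * (p x - y x))) D := by
    refine .of_bound (by fun_prop) 1 (.of_forall fun x => ?_)
    rw [norm_eq_abs, ← mul_assoc, abs_mul]
    nlinarith [hηh x, hpy x, abs_nonneg (η * h x), abs_nonneg (p x - y x)]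
  have hsq : Integrable (fun x => η ^ 2 * h x ^ 2) D := by
    refine .of_bound (by fun_prop) 1 (.of_forall fun x => ?_)
    rw [norm_eq_abs, ← mul_pow, abs_pow]
    exact pow_le_one₀ (abs_nonneg _) (hηh x)
  have hdiff : Integrable (fun x => crossEntropy (p x) (y x) - η * (h x * (p x - y x))) D :=
    hℓ.sub hcorr
  calc ∫ x, crossEntropy (p' x) (y x) ∂D
      ≤ ∫ x, crossEntropy (p x) (y x) - η * (h x * (p x - y x)) + η ^ 2 * h x ^ 2 ∂D :=
        integral_mono hℓ' (hdiff.add hsq)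
          fun x => hp' x ▸ crossEntropy_mwUpdate_le (hp01 x) (y x) (hηh x)
    _ = _ := by
        rw [integral_add hdiff hsq, integral_sub hℓ hcorr,
          integral_const_mul, integral_const_mul]

lemma le_exp_neg_mul_of_descent {ℓ ℓ' c q L η : ℝ} (hL : 0 < L) (hη : η = 1 / (8 * L))
    (hℓ : 0 ≤ ℓ) (hdescent : ℓ' ≤ ℓ - η * c + η ^ 2 * q) (hc : c ≥ 1 / 4 * ℓ)
    (hq : q ≤ L * ℓ) :
    ℓ' ≤ exp (-(1 / (64 * L))) * ℓ := by
  have hη0 : 0 < η := by rw [hη]; positivity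
  have hgain : η * (1 / 4 * ℓ) - η ^ 2 * (L * ℓ) = 1 / (64 * L) * ℓ := by
    rw [hη]; field_simp; ring
  have hlin : ℓ' ≤ (1 - 1 / (64 * L)) * ℓ := by
    nlinarith [mul_le_mul_of_nonneg_left hc hη0.le, mul_le_mul_of_nonneg_left hq (sq_nonneg η)]
  refine hlin.trans (mul_le_mul_of_nonneg_right ?_ hℓ)
  linarith [add_one_le_exp (-(1 / (64 * L)))]

lemma le_of_le_exp_neg_mul {a b s α : ℝ} (h : a ≤ exp (-s) * b) (hα : 0 < α) (hb : 0 < b)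
    (hs : log (b / α) ≤ s) : a ≤ α :=
  calc a ≤ exp (-s) * b := h
    _ ≤ exp (-log (b / α)) * b := by gcongr
    _ = α := by rw [exp_neg, exp_log (by positivity)]; field_simp

end

/-- Linear convergence of gradient-learning multiplicative-weights updates
(Proposition 2 of the paper). -/
theorem mw_gradient_linear_convergence
    {X : Type*} [MeasurableSpace X] (D : Measure X) [IsProbabilityMeasure D]
    (y : X → ℝ) (hy : Measurable y) (hy01 : ∀ x, y x = 0 ∨ y x = 1)
    (L α η : ℝ) (hL : 0 < L) (hα : 0 < α) (hη : η = 1 / (8 * L))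
    (T : ℕ) (f : ℕ → X → ℝ) (h : ℕ → X → ℝ)
    (hfm : ∀ t ≤ T, Measurable (f t))
    (hf01 : ∀ t ≤ T, ∀ x, f t x ∈ Set.Ioo (0 : ℝ) 1)
    (hℓ : ∀ t ≤ T,
      Integrable (fun x => -(y x) * Real.log (f t x) - (1 - y x) * Real.log (1 - f t x)) D)
    (hhm : ∀ t < T, Measurable (h t))
    (hηh : ∀ t < T, ∀ x, |η * h t x| ≤ 1)
    (hh2 : ∀ t < T, ∫ x, (h t x)^2 ∂D
      ≤ L * ∫ x, (-(y x) * Real.log (f t x) - (1 - y x) * Real.log (1 - f t x)) ∂D)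
    (hcorr : ∀ t < T, ∫ x, h t x * (f t x - y x) ∂D
      ≥ (1/4) * ∫ x, (-(y x) * Real.log (f t x) - (1 - y x) * Real.log (1 - f t x)) ∂D)
    (hupd : ∀ t < T, ∀ x,
      f (t + 1) x = f t x * Real.exp (-η * h t x) / (1 - f t x + f t x * Real.exp (-η * h t x))) :
    (∫ x, (-(y x) * Real.log (f T x) - (1 - y x) * Real.log (1 - f T x)) ∂D
        ≤ Real.exp (-(T : ℝ) / (64 * L))
          * ∫ x, (-(y x) * Real.log (f 0 x) - (1 - y x) * Real.log (1 - f 0 x)) ∂D)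
    ∧ ((α < ∫ x, (-(y x) * Real.log (f 0 x) - (1 - y x) * Real.log (1 - f 0 x)) ∂D) →
        (64 * L * Real.log
            ((∫ x, (-(y x) * Real.log (f 0 x) - (1 - y x) * Real.log (1 - f 0 x)) ∂D) / α)
          ≤ (T : ℝ)) →
        ∫ x, (-(y x) * Real.log (f T x) - (1 - y x) * Real.log (1 - f T x)) ∂D ≤ α) := by
  set ℓ : ℕ → ℝ := fun t => ∫ x, crossEntropy (f t x) (y x) ∂D
  have hy01' : ∀ x, y x ∈ Icc (0 : ℝ) 1 := fun x => by rcases hy01 x with hx | hx <;> simp [hx]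
  have step : ∀ t < T, ℓ (t + 1) ≤ exp (-(1 / (64 * L))) * ℓ t := fun t ht => by
    have hdescent := integral_crossEntropy_mwUpdate_le hy (hfm t ht.le) (hhm t ht) hy01'
      (hf01 t ht.le) (hηh t ht) (hupd t ht) (hℓ t ht.le) (hℓ (t + 1) ht)
    exact le_exp_neg_mul_of_descent hL hη (integral_nonneg fun x =>
      crossEntropy_nonneg (hf01 t ht.le x) (hy01' x)) hdescent (hcorr t ht) (hh2 t ht)
  have decay : ℓ T ≤ exp (-(T : ℝ) / (64 * L)) * ℓ 0 := by
    calc ℓ T ≤ exp (-(1 / (64 * L))) ^ T * ℓ 0 := le_geom (exp_pos _).le T step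
      _ = exp (-(T : ℝ) / (64 * L)) * ℓ 0 := by rw [← exp_nat_mul]; ring_nf
  refine ⟨decay, fun hℓ0 hT => le_of_le_exp_neg_mul (by rwa [neg_div] at decay) hα
    (hα.trans hℓ0) ?_⟩
  rw [le_div_iff₀ (by positivity)]
  linarith
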